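/- For n \geq 6 and any vertex i of I_n with 1 < i < n, the vertex i lies in at most 4 three-cycles of I_n. Consequently, at most two vertices of I_n (namely 1 and n) lie in more than five 3-cycles. -/

import Mathlib

/-!
Every edge of `I_n` points from smaller to larger except the reversed ones, `i + 1 → i` and
`n - 1 → 0`. In a 3-cycle the edge entering its smallest vertex `a` is therefore reversed, so
either the cycle is `a → a + 2 → a + 1 → a` or it is `0 → b → n - 1 → 0`. An inner vertex `i`
thus lies only in `{i-2, i-1, i}`, `{i-1, i, i+1}`, `{i, i+1, i+2}` and `{0, i, n-1}`, and every
vertex in more than four 3-cycles is `0` or `n - 1`.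
-/

/-- The pairs of the linear order on `Fin n` whose edges are reversed to form `I_n`. -/
def RevPair (n : ℕ) (i j : Fin n) : Prop :=
  (j.val = i.val + 1) ∨ (i.val = 0 ∧ j.val = n - 1)

/-- The tournament `I_n` on `Fin n` (vertices `0, …, n-1` standing for `1, …, n`). -/
def Irel (n : ℕ) (i j : Fin n) : Prop :=
  (i.val < j.val ∧ ¬ RevPair n i j) ∨ (j.val < i.val ∧ RevPair n j i)

/-- A 3-element subset of vertices inducing a directed 3-cycle in `I_n`. -/
def IsCycleSet (n : ℕ) (s : Finset (Fin n)) : Prop :=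
  ∃ a b c : Fin n, s = {a, b, c} ∧ Irel n a b ∧ Irel n b c ∧ Irel n c a

namespace Irel

variable {n : ℕ} {a b c : Fin n}

lemma val_ne (h : Irel n a b) : a.val ≠ b.val := by
  unfold Irel at h
  omega

lemma cycle_of_lt (hbc : Irel n b c) (hca : Irel n c a)
    (hb : a.val < b.val) (hc : a.val < c.val) :
    (b.val = a.val + 2 ∧ c.val = a.val + 1) ∨
      (a.val = 0 ∧ 0 < b.val ∧ b.val < n - 1 ∧ c.val = n - 1) := by
  have := c.isLt
  simp only [Irel, RevPair] at hbc hca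
  omega

end Irel

lemma Finset.triple_rotate {α : Type*} [DecidableEq α] (a b c : α) :
    ({a, b, c} : Finset α) = {b, c, a} := by
  rw [Finset.insert_comm, Finset.pair_comm]

namespace IsCycleSet

variable {n : ℕ} {s : Finset (Fin n)}

lemma exists_min (hs : IsCycleSet n s) :
    ∃ a b c : Fin n, s = {a, b, c} ∧ Irel n b c ∧ Irel n c a ∧
      a.val < b.val ∧ a.val < c.val := by
  obtain ⟨a, b, c, rfl, hab, hbc, hca⟩ := hs
  have := hab.val_ne; have := hbc.val_ne; have := hca.val_ne
  by_cases ha : a.val < b.val ∧ a.val < c.val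
  · exact ⟨a, b, c, rfl, hbc, hca, ha⟩
  by_cases hb : b.val < c.val ∧ b.val < a.val
  · exact ⟨b, c, a, Finset.triple_rotate a b c, hca, hab, hb⟩
  · exact ⟨c, a, b, (Finset.triple_rotate c a b).symm, hab, hbc, by omega⟩

/-- `i - 2` and `i - 1` truncate at small `i`, which is harmless for an upper bound. -/
lemma map_val_mem {i : Fin n} (hs : IsCycleSet n s) (hi : i ∈ s) (hi0 : 0 < i.val)
    (hin : i.val < n - 1) :
    s.map Fin.valEmbedding ∈ ({{i.val - 2, i.val - 1, i.val}, {i.val - 1, i.val, i.val + 1},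
      {i.val, i.val + 1, i.val + 2}, {0, i.val, n - 1}} : Finset (Finset ℕ)) := by
  obtain ⟨a, b, c, rfl, hbc, hca, hb, hc⟩ := hs.exists_min
  simp only [Finset.map_insert, Finset.map_singleton, Fin.valEmbedding_apply, Finset.mem_insert,
    Finset.mem_singleton, Finset.ext_iff] at hi ⊢
  rcases Irel.cycle_of_lt hbc hca hb hc with h | h <;> rcases hi with rfl | rfl | rfl
  · exact Or.inr <| Or.inr <| Or.inl fun t => by omega
  · exact Or.inl fun t => by omega
  · exact Or.inr <| Or.inl fun t => by omega
  · omega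
  · exact Or.inr <| Or.inr <| Or.inr fun t => by omega
  · omega

end IsCycleSet

open Finset

open Classical in
noncomputable def cycleSetsThrough (n : ℕ) (v : Fin n) : Finset (Finset (Fin n)) :=
  (univ : Finset (Finset (Fin n))).filter (fun s => IsCycleSet n s ∧ v ∈ s)

variable {n : ℕ}

@[simp]
lemma mem_cycleSetsThrough {v : Fin n} {s : Finset (Fin n)} :
    s ∈ cycleSetsThrough n v ↔ IsCycleSet n s ∧ v ∈ s := by
  simp [cycleSetsThrough]

lemma card_cycleSetsThrough_le_four {i : Fin n} (hi0 : 0 < i.val) (hin : i.val < n - 1) :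
    #(cycleSetsThrough n i) ≤ 4 :=
  (card_le_card_of_injOn (·.map Fin.valEmbedding)
    (fun _ hs => (mem_cycleSetsThrough.1 hs).1.map_val_mem (mem_cycleSetsThrough.1 hs).2 hi0 hin)
    (map_injective _).injOn).trans card_le_four

lemma card_filter_lt_card_cycleSetsThrough_le_two {m : ℕ} (hm : 4 ≤ m) :
    #(univ.filter fun v : Fin n => m < #(cycleSetsThrough n v)) ≤ 2 := by
  refine (card_le_card_of_injOn (β := ℕ) (t := {0, n - 1}) Fin.val (fun v hv => ?_)
    Fin.val_injective.injOn).trans card_le_two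
  simp only [coe_filter, mem_univ, true_and, Set.mem_ofPred_eq] at hv
  have hend : ¬ (0 < v.val ∧ v.val < n - 1) := fun h =>
    (hm.trans_lt hv).not_ge (card_cycleSetsThrough_le_four h.1 h.2)
  simp only [coe_insert, coe_singleton, Set.mem_insert_iff, Set.mem_singleton_iff]
  omega

open Classical in
theorem stmt12_general (n : ℕ) :
    (∀ i : Fin n, 0 < i.val → i.val < n - 1 →
      ((Finset.univ : Finset (Finset (Fin n))).filter
        (fun s => IsCycleSet n s ∧ i ∈ s)).card ≤ 4) ∧
    ((Finset.univ : Finset (Fin n)).filter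
      (fun v => 5 < ((Finset.univ : Finset (Finset (Fin n))).filter
        (fun s => IsCycleSet n s ∧ v ∈ s)).card)).card ≤ 2 :=
  ⟨fun _ => card_cycleSetsThrough_le_four, card_filter_lt_card_cycleSetsThrough_le_two (by norm_num)⟩

open Classical in
/-- For `n ≥ 6`, every vertex `i` of `I_n` other than the first and last
(0-indexed: `0 < i < n - 1`) lies in at most 4 three-cycles; consequently at most
two vertices of `I_n` lie in more than five 3-cycles. -/
theorem stmt12 (n : ℕ) (hn : 6 ≤ n) :
    (∀ i : Fin n, 0 < i.val → i.val < n - 1 →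
      ((Finset.univ : Finset (Finset (Fin n))).filter
        (fun s => IsCycleSet n s ∧ i ∈ s)).card ≤ 4) ∧
    ((Finset.univ : Finset (Fin n)).filter
      (fun v => 5 < ((Finset.univ : Finset (Finset (Fin n))).filter
        (fun s => IsCycleSet n s ∧ v ∈ s)).card)).card ≤ 2 :=
  stmt12_general n
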